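/- Let t > 0 and let f : [0,t] → [0,1] be continuous and strictly decreasing on (0,t). For θ ∈ (θ_{f(t)}, 2π − θ_{f(t)}), set ℓ(θ) = 0 if f(0) ≤ sin(θ/2), and otherwise let ℓ(θ) be the unique s ∈ (0,t) with f(s) = sin(θ/2). Then for every continuous function g : ∂D → ℂ, (1/t) ∫_0^t (∫_{∂D} g dν_{f(s)}) ds = ∫_{θ_{f(t)}}^{2π − θ_{f(t)}} g(e^{iθ}) · D_t(θ) dθ, where D_t(θ) = (1/(2πt)) ∫_{ℓ(θ)}^{t} sin(θ/2)/√(sin²(θ/2) − f(s)²) ds. In particular, the average measure σ_t = (1/t)∫_0^t ν_{f(s)} ds is absolutely continuous with density D_t and support {e^{iθ} : θ_{f(t)} ≤ θ ≤ 2π − θ_{f(t)}}. -/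

import Mathlib

open Filter MeasureTheory

noncomputable section

def thetaA (a : ℝ) : ℝ := 2 * Real.arcsin a

/-- Integral of `g` against the equilibrium measure `ν_a` of the circular arc `Γ_a`
(for `a = 1`, `ν_1 = δ_{-1}`). -/
def nuInt (a : ℝ) (g : ℂ → ℂ) : ℂ :=
  if a = 1 then g (-1)
  else ∫ θ in thetaA a..(2 * Real.pi - thetaA a),
    ((1 / (2 * Real.pi) * Real.sin (θ / 2) /
        Real.sqrt (Real.cos (thetaA a / 2) ^ 2 - Real.cos (θ / 2) ^ 2) : ℝ) : ℂ) *
      g (Complex.exp (θ * Complex.I))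

open Real Set

/-!
The density of `ν_a` vanishes off the arc `(θ_a, 2π - θ_a)`, and `θ_{f(t)} ≤ θ_{f(s)}` for
`0 < s < t`; so every `ν_{f(s)}` is an integral over the one arc `(θ_{f(t)}, 2π - θ_{f(t)})`.
Each `ν_{f(s)}` has mass one (`-2 arcsin (cos (θ/2) / cos (θ_a/2))` is a primitive of its density
times `2π`), so the density is integrable in `(s, θ)` and Fubini swaps the integrals. For fixed `θ`
the density vanishes while `sin (θ/2) ≤ f s`, that is for `s ≤ ℓ(θ)`.
-/

theorem integral_integral_smul_swap_of_bounded {α β E : Type*} [MeasurableSpace α]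
    [MeasurableSpace β] [NormedAddCommGroup E] [NormedSpace ℝ E] [CompleteSpace E]
    {μ : Measure α} {ν : Measure β} [IsFiniteMeasure μ] [SFinite ν]
    {K : α → β → ℝ} {h : β → E} {C M : ℝ}
    (hK : AEStronglyMeasurable (Function.uncurry K) (μ.prod ν))
    (hKx : ∀ᵐ x ∂μ, Integrable (K x) ν ∧ ∫ y, ‖K x y‖ ∂ν ≤ C)
    (hh : AEStronglyMeasurable h ν) (hM : ∀ y, ‖h y‖ ≤ M) :
    ∫ x, ∫ y, K x y • h y ∂ν ∂μ = ∫ y, (∫ x, K x y ∂μ) • h y ∂ν := by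
  have hKint : Integrable (Function.uncurry K) (μ.prod ν) := by
    refine (integrable_prod_iff hK).2 ⟨hKx.mono fun _ hx => hx.1, ?_⟩
    refine (integrable_const C).mono' hK.norm.integral_prod_right' ?_
    filter_upwards [hKx] with x hx
    rw [norm_of_nonneg (integral_nonneg fun _ => norm_nonneg _)]
    exact hx.2
  rw [integral_integral_swap
    (hKint.smul_bdd M hh.comp_snd (Eventually.of_forall fun p => hM p.2))]
  simp only [integral_smul_const]

lemma exists_bound_comp_exp_mul_I {g : ℂ → ℂ} (hg : Continuous g) :
    ∃ M, ∀ θ : ℝ, ‖g (Complex.exp (θ * Complex.I))‖ ≤ M := by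
  obtain ⟨M, hM⟩ := (isCompact_sphere (0 : ℂ) 1).exists_bound_of_continuousOn hg.continuousOn
  exact ⟨M, fun θ => hM _ (by simp [Complex.norm_exp_ofReal_mul_I])⟩

section Monotone

variable {α β : Type*} [LinearOrder α] [LinearOrder β] {f : α → β} {a b x : α}

lemma StrictAntiOn.lt_of_forall_le_of_mem_Ioo [DenselyOrdered α] {C : β}
    (hf : StrictAntiOn f (Ioo a b)) (hC : ∀ y ∈ Ioo a b, f y ≤ C) (hx : x ∈ Ioo a b) :
    f x < C := by
  obtain ⟨y, hay, hyx⟩ := exists_between hx.1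
  have hy : y ∈ Ioo a b := ⟨hay, hyx.trans hx.2⟩
  exact (hf hy hx hyx).trans_le (hC y hy)

lemma AntitoneOn.apply_le_of_continuousWithinAt [TopologicalSpace α] [OrderTopology α]
    [DenselyOrdered α] [TopologicalSpace β] [OrderClosedTopology β]
    (hf : AntitoneOn f (Ioo a b)) (hb : ContinuousWithinAt f (Ioo a b) b) (hx : x ∈ Ioo a b) :
    f b ≤ f x := by
  have := right_nhdsWithin_Ioo_neBot hx.2
  refine le_of_tendsto ((hb.mono (Ioo_subset_Ioo_left hx.1.le)).tendsto) ?_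
  filter_upwards [self_mem_nhdsWithin] with y hy
  exact hf hx ⟨hx.1.trans hy.1, hy.2⟩ hy.1.le

end Monotone

section ArcKernel

/-- `2π` times the density of `ν_a`. Where `sin (θ / 2) ^ 2 ≤ a ^ 2` the square root is `0`, hence
so is the quotient: no indicator of the arc is needed. -/
def arcKernel (a θ : ℝ) : ℝ := sin (θ / 2) / √(sin (θ / 2) ^ 2 - a ^ 2)

variable {a θ : ℝ}

lemma measurable_arcKernel : Measurable (Function.uncurry arcKernel) := by
  unfold Function.uncurry arcKernel
  fun_prop

lemma sin_half_nonneg (hθ : θ ∈ Icc 0 (2 * π)) : 0 ≤ sin (θ / 2) :=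
  sin_nonneg_of_nonneg_of_le_pi (by linarith [hθ.1]) (by linarith [hθ.2])

lemma arcKernel_nonneg (hθ : θ ∈ Icc 0 (2 * π)) : 0 ≤ arcKernel a θ :=
  div_nonneg (sin_half_nonneg hθ) (sqrt_nonneg _)

lemma arcKernel_eq_zero (h0 : 0 ≤ sin (θ / 2)) (ha : sin (θ / 2) ≤ a) : arcKernel a θ = 0 := by
  rw [arcKernel, sqrt_eq_zero'.mpr (by nlinarith), div_zero]

lemma thetaA_nonneg (h : 0 ≤ a) : 0 ≤ thetaA a := by
  unfold thetaA; linarith [arcsin_nonneg.2 h]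

lemma thetaA_le_pi (a : ℝ) : thetaA a ≤ π := by
  unfold thetaA; linarith [arcsin_le_pi_div_two a]

lemma thetaA_mono : Monotone thetaA := fun _ _ h => by
  unfold thetaA; linarith [monotone_arcsin h]

lemma lt_sin_half_iff_mem_Ioo (hθ : θ ∈ Icc 0 (2 * π)) :
    a < sin (θ / 2) ↔ θ ∈ Ioo (thetaA a) (2 * π - thetaA a) := by
  have h₁ := arcsin_le_pi_div_two a
  have h₂ := neg_pi_div_two_le_arcsin a
  unfold thetaA
  rcases le_total θ π with h | h
  · rw [← arcsin_lt_iff_lt_sin' ⟨by linarith [hθ.1, pi_pos], by linarith⟩]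
    exact ⟨fun h' => ⟨by linarith, by linarith⟩, fun h' => by linarith [h'.1]⟩
  · rw [← sin_pi_sub, ← arcsin_lt_iff_lt_sin' ⟨by linarith [hθ.2, pi_pos], by linarith⟩]
    exact ⟨fun h' => ⟨by linarith, by linarith⟩, fun h' => by linarith [h'.2]⟩

variable {b : ℝ}

lemma arcKernel_eq_zero_of_mem_sdiff (hb : 0 ≤ b)
    (hθ : θ ∈ Ioo b (2 * π - b) \ Ioo (thetaA a) (2 * π - thetaA a)) :
    arcKernel a θ = 0 := by
  have hθ' : θ ∈ Icc 0 (2 * π) := ⟨by linarith [hθ.1.1], by linarith [hθ.1.2]⟩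
  exact arcKernel_eq_zero (sin_half_nonneg hθ')
    (not_lt.1 fun h => hθ.2 ((lt_sin_half_iff_mem_Ioo hθ').1 h))

/-- As `√(1 - a ^ 2) = cos (θ_a / 2)`, this runs from `-π` at `θ_a` to `π` at `2π - θ_a`. -/
def arcKernelPrimitive (a θ : ℝ) : ℝ := -2 * arcsin (cos (θ / 2) / √(1 - a ^ 2))

lemma continuous_arcKernelPrimitive (a : ℝ) : Continuous (arcKernelPrimitive a) := by
  unfold arcKernelPrimitive
  fun_prop

lemma hasDerivAt_arcKernelPrimitive (ha : 0 ≤ a) (hθ : a < sin (θ / 2)) :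
    HasDerivAt (arcKernelPrimitive a) (arcKernel a θ) θ := by
  have hsin : sin (θ / 2) ^ 2 + cos (θ / 2) ^ 2 = 1 := sin_sq_add_cos_sq _
  have hpos : 0 < sin (θ / 2) ^ 2 - a ^ 2 := by nlinarith
  have hc : 0 < √(1 - a ^ 2) := sqrt_pos.2 (by nlinarith)
  have hcsq : √(1 - a ^ 2) ^ 2 = 1 - a ^ 2 := sq_sqrt (by nlinarith)
  set x := cos (θ / 2) / √(1 - a ^ 2)
  have h1x : 1 - x ^ 2 = (sin (θ / 2) ^ 2 - a ^ 2) / √(1 - a ^ 2) ^ 2 := by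
    simp only [x, div_pow]; field_simp; linarith
  have hx : x ^ 2 < 1 := by
    have := div_pos hpos (pow_pos hc 2); linarith
  have hcos : HasDerivAt (fun θ => cos (θ / 2) / √(1 - a ^ 2))
      (-sin (θ / 2) * (1 / 2) / √(1 - a ^ 2)) θ :=
    ((hasDerivAt_cos _).comp θ ((hasDerivAt_id θ).div_const 2)).div_const _
  refine (((hasDerivAt_arcsin (by nlinarith) (by nlinarith)).comp θ hcos).const_mul
    (-2)).congr_deriv ?_
  rw [h1x, sqrt_div hpos.le, sqrt_sq hc.le, arcKernel]
  field_simp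

lemma integrableOn_arcKernel (ha : 0 ≤ a) :
    IntegrableOn (arcKernel a) (Ioo (thetaA a) (2 * π - thetaA a)) := by
  have h0 := thetaA_nonneg ha
  refine (intervalIntegral.integrableOn_deriv_of_nonneg
    (continuous_arcKernelPrimitive a).continuousOn (fun θ hθ => ?_)
    (fun θ hθ => arcKernel_nonneg ⟨by linarith [hθ.1], by linarith [hθ.2]⟩)).mono_set
    Ioo_subset_Ioc_self
  refine hasDerivAt_arcKernelPrimitive ha ((lt_sin_half_iff_mem_Ioo ?_).2 hθ)
  exact ⟨by linarith [hθ.1], by linarith [hθ.2]⟩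

lemma integral_arcKernel (ha₀ : 0 ≤ a) (ha₁ : a < 1) :
    ∫ θ in Ioo (thetaA a) (2 * π - thetaA a), arcKernel a θ = 2 * π := by
  have hle : thetaA a ≤ 2 * π - thetaA a := by linarith [thetaA_le_pi a, pi_pos]
  have hc : √(1 - a ^ 2) ≠ 0 := (sqrt_pos.2 (by nlinarith)).ne'
  have hθ : thetaA a / 2 = arcsin a := by unfold thetaA; ring
  have hθ' : (2 * π - thetaA a) / 2 = π - arcsin a := by unfold thetaA; ring
  rw [← integral_Ioc_eq_integral_Ioo, ← intervalIntegral.integral_of_le hle,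
    intervalIntegral.integral_eq_sub_of_hasDerivAt_of_le hle
      (continuous_arcKernelPrimitive a).continuousOn
      (fun θ hθ => hasDerivAt_arcKernelPrimitive ha₀ ((lt_sin_half_iff_mem_Ioo
        ⟨by linarith [hθ.1, thetaA_nonneg ha₀], by linarith [hθ.2, thetaA_nonneg ha₀]⟩).2 hθ))
      ((intervalIntegrable_iff_integrableOn_Ioo_of_le hle).2 (integrableOn_arcKernel ha₀))]
  simp only [arcKernelPrimitive, hθ, hθ', cos_pi_sub, cos_arcsin, neg_div, div_self hc,
    arcsin_neg, arcsin_one]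
  ring

lemma integrableOn_arcKernel_of_nonneg (ha : 0 ≤ a) (hb : 0 ≤ b) :
    IntegrableOn (arcKernel a) (Ioo b (2 * π - b)) :=
  (integrableOn_arcKernel ha).of_forall_sdiff_eq_zero measurableSet_Ioo
    fun _ hθ => arcKernel_eq_zero_of_mem_sdiff hb hθ

lemma integral_norm_arcKernel_of_le (ha₀ : 0 ≤ a) (ha₁ : a < 1) (hb₀ : 0 ≤ b)
    (hb : b ≤ thetaA a) :
    ∫ θ in Ioo b (2 * π - b), ‖arcKernel a θ‖ = 2 * π := by
  rw [setIntegral_congr_fun measurableSet_Ioo fun θ hθ =>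
      norm_of_nonneg (arcKernel_nonneg ⟨by linarith [hθ.1], by linarith [hθ.2]⟩),
    setIntegral_eq_of_subset_of_forall_sdiff_eq_zero measurableSet_Ioo
      (Ioo_subset_Ioo hb (by linarith)) fun _ hθ => arcKernel_eq_zero_of_mem_sdiff hb₀ hθ]
  exact integral_arcKernel ha₀ ha₁

lemma nuInt_eq_setIntegral (ha₀ : 0 ≤ a) (ha₁ : a < 1) (hb₀ : 0 ≤ b) (hb : b ≤ thetaA a)
    (g : ℂ → ℂ) :
    nuInt a g = (2 * π)⁻¹ •
      ∫ θ in Ioo b (2 * π - b), arcKernel a θ • g (Complex.exp (θ * Complex.I)) := by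
  have hcos : cos (thetaA a / 2) ^ 2 = 1 - a ^ 2 := by
    rw [thetaA, mul_div_cancel_left₀ _ two_ne_zero, cos_arcsin, sq_sqrt (by nlinarith)]
  rw [nuInt, if_neg ha₁.ne, intervalIntegral.integral_of_le (by linarith [thetaA_le_pi a]),
    integral_Ioc_eq_integral_Ioo, setIntegral_eq_of_subset_of_forall_sdiff_eq_zero
      measurableSet_Ioo (Ioo_subset_Ioo hb (by linarith : 2 * π - thetaA a ≤ 2 * π - b))
      fun θ hθ => by simp [arcKernel_eq_zero_of_mem_sdiff hb₀ hθ], ← integral_smul]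
  refine setIntegral_congr_fun measurableSet_Ioo fun θ _ => ?_
  have harg : cos (thetaA a / 2) ^ 2 - cos (θ / 2) ^ 2 = sin (θ / 2) ^ 2 - a ^ 2 := by
    linarith [sin_sq_add_cos_sq (θ / 2)]
  simp only [harg, arcKernel, Complex.real_smul]
  push_cast
  ring

end ArcKernel

lemma mem_Ico_and_thetaA_le_of_strictAntiOn {f : ℝ → ℝ} {t s : ℝ}
    (hmap : ∀ y ∈ Icc 0 t, f y ∈ Icc 0 1) (hcont : ContinuousWithinAt f (Ioo 0 t) t)
    (hmono : StrictAntiOn f (Ioo 0 t)) (hs : s ∈ Ioo 0 t) :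
    f s ∈ Ico 0 1 ∧ thetaA (f t) ≤ thetaA (f s) :=
  ⟨⟨(hmap s (Ioo_subset_Icc_self hs)).1,
      hmono.lt_of_forall_le_of_mem_Ioo (fun y hy => (hmap y (Ioo_subset_Icc_self hy)).2) hs⟩,
    thetaA_mono (hmono.antitoneOn.apply_le_of_continuousWithinAt hcont hs)⟩

/-- The kernel vanishes for `s ≤ L`, where `sin (θ / 2) ≤ f s`. -/
lemma setIntegral_arcKernel_eq_intervalIntegral {f : ℝ → ℝ} {t θ L : ℝ} (ht : 0 ≤ t)
    (hf : AntitoneOn f (Ioo 0 t)) (hθ : θ ∈ Icc 0 (2 * π))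
    (hL : (f 0 ≤ sin (θ / 2) → L = 0) ∧
      (sin (θ / 2) < f 0 → L ∈ Ioo 0 t ∧ f L = sin (θ / 2))) :
    ∫ s in Ioo 0 t, arcKernel (f s) θ = ∫ s in L..t, arcKernel (f s) θ := by
  obtain ⟨hLt, hle⟩ : L ∈ Icc 0 t ∧ ∀ s ∈ Ioc 0 L, sin (θ / 2) ≤ f s := by
    rcases le_or_gt (f 0) (sin (θ / 2)) with h | h
    · rw [hL.1 h]
      exact ⟨⟨le_rfl, ht⟩, fun s hs => absurd hs.2 hs.1.not_ge⟩
    · obtain ⟨hL0, hfL⟩ := hL.2 h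
      refine ⟨Ioo_subset_Icc_self hL0, fun s hs => hfL ▸ ?_⟩
      exact hf ⟨hs.1, hs.2.trans_lt hL0.2⟩ hL0 hs.2
  rw [intervalIntegral.integral_of_le hLt.2, ← integral_Ioc_eq_integral_Ioo,
    setIntegral_eq_of_subset_of_forall_sdiff_eq_zero measurableSet_Ioc (Ioc_subset_Ioc_left hLt.1)]
  exact fun s hs =>
    arcKernel_eq_zero (sin_half_nonneg hθ) (hle s ⟨hs.1.1, not_lt.1 fun h => hs.2 ⟨h, hs.1.2⟩⟩)

/-- For a continuous, strictly decreasing sampling function `f : [0,t] → [0,1]`, the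
averaged equilibrium measure `(1/t)∫_0^t ν_{f(s)} ds` is absolutely continuous with the
explicit density `D_t` on the arc `{e^{iθ} : θ_{f(t)} ≤ θ ≤ 2π - θ_{f(t)}}`. -/
theorem stmt18 (t : ℝ) (ht : 0 < t) (f : ℝ → ℝ)
    (hmap : ∀ s ∈ Set.Icc (0 : ℝ) t, f s ∈ Set.Icc (0 : ℝ) 1)
    (hcont : ContinuousOn f (Set.Icc (0 : ℝ) t))
    (hmono : StrictAntiOn f (Set.Ioo (0 : ℝ) t))
    (l : ℝ → ℝ)
    (hl : ∀ θ ∈ Set.Ioo (thetaA (f t)) (2 * Real.pi - thetaA (f t)),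
      (f 0 ≤ Real.sin (θ / 2) → l θ = 0) ∧
      (Real.sin (θ / 2) < f 0 → l θ ∈ Set.Ioo (0 : ℝ) t ∧ f (l θ) = Real.sin (θ / 2)))
    (g : ℂ → ℂ) (hg : Continuous g) :
    (t : ℂ)⁻¹ * (∫ s in (0 : ℝ)..t, nuInt (f s) g)
      = ∫ θ in thetaA (f t)..(2 * Real.pi - thetaA (f t)),
          g (Complex.exp (θ * Complex.I)) *
            (((1 / (2 * Real.pi * t)) *
              ∫ s in (l θ)..t,
                Real.sin (θ / 2) / Real.sqrt (Real.sin (θ / 2) ^ 2 - f s ^ 2) : ℝ) : ℂ) := by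
  have ha₀ : 0 ≤ thetaA (f t) := thetaA_nonneg (hmap t ⟨ht.le, le_rfl⟩).1
  set μ := volume.restrict (Ioo 0 t)
  set ν := volume.restrict (Ioo (thetaA (f t)) (2 * π - thetaA (f t)))
  have hfs (s : ℝ) (hs : s ∈ Ioo 0 t) := mem_Ico_and_thetaA_le_of_strictAntiOn hmap
    ((hcont t ⟨ht.le, le_rfl⟩).mono Ioo_subset_Icc_self) hmono hs
  have hK : AEStronglyMeasurable (Function.uncurry fun s θ => arcKernel (f s) θ) (μ.prod ν) :=
    (measurable_arcKernel.comp_aemeasurable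
      (((hcont.mono Ioo_subset_Icc_self).aemeasurable measurableSet_Ioo).comp_fst.prodMk
        measurable_snd.aemeasurable)).aestronglyMeasurable
  have hKs : ∀ᵐ s ∂μ,
      Integrable (arcKernel (f s)) ν ∧ ∫ θ, ‖arcKernel (f s) θ‖ ∂ν ≤ 2 * π := by
    filter_upwards [ae_restrict_mem measurableSet_Ioo] with s hs
    obtain ⟨⟨h₀, h₁⟩, hle⟩ := hfs s hs
    exact ⟨integrableOn_arcKernel_of_nonneg h₀ ha₀,
      (integral_norm_arcKernel_of_le h₀ h₁ ha₀ hle).le⟩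
  obtain ⟨M, hM⟩ := exists_bound_comp_exp_mul_I hg
  calc (t : ℂ)⁻¹ * ∫ s in 0..t, nuInt (f s) g
      = (t : ℂ)⁻¹ * ∫ s, (2 * π)⁻¹ •
          ∫ θ, arcKernel (f s) θ • g (Complex.exp (θ * Complex.I)) ∂ν ∂μ := by
        rw [intervalIntegral.integral_of_le ht.le, integral_Ioc_eq_integral_Ioo]
        congr 1
        exact setIntegral_congr_fun measurableSet_Ioo fun s hs =>
          nuInt_eq_setIntegral (hfs s hs).1.1 (hfs s hs).1.2 ha₀ (hfs s hs).2 g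
    _ = (t : ℂ)⁻¹ * (2 * π)⁻¹ •
          ∫ θ, (∫ s, arcKernel (f s) θ ∂μ) • g (Complex.exp (θ * Complex.I)) ∂ν := by
        rw [integral_smul, integral_integral_smul_swap_of_bounded hK hKs
          (by fun_prop : Continuous _).aestronglyMeasurable hM]
    _ = _ := by
        rw [intervalIntegral.integral_of_le (by linarith [thetaA_le_pi (f t)]),
          integral_Ioc_eq_integral_Ioo, ← integral_smul, ← integral_const_mul]
        refine setIntegral_congr_fun measurableSet_Ioo fun θ hθ => ?_
        rw [setIntegral_arcKernel_eq_intervalIntegral ht.le hmono.antitoneOn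
          ⟨by linarith [hθ.1], by linarith [hθ.2]⟩ (hl θ hθ)]
        simp only [arcKernel, Complex.real_smul]
        push_cast
        field_simp

end
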